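/- arXiv:1810.00353 — 2 statements merged into one kernel-verified Lean document; each statement's English description precedes it below -/
import Mathlib

section
/- Let (X*, Y*) ∈ S^m_+ × S^m_+ satisfy strict complementarity: X*∘Y* = O and X* + Y* ∈ S^m_{++}. Let μ_r > 0 with μ_r → 0 and let (X_r, Y_r) ∈ S^m_{++} × S^m_{++} with (X_r,Y_r) → (X*,Y*), and suppose there exist C > 0 and ζ > 0 such that ‖X_r∘Y_r − μ_r I‖_F ≤ C·μ_r^{1+ζ} for all r. Then there exist M > 0 and R such that for all r ≥ R and all Z ∈ S^m: ‖X_r∘(Y_r∘Z) − Y_r∘(X_r∘Z)‖_F ≤ M·μ_r^{ζ}·‖X_r∘Z‖_F. (Equivalently, ‖L_{X_r}L_{Y_r}L_{X_r}^{-1} − L_{Y_r}‖₂ = O(μ_r^{ζ}), where L_X(Z) := X∘Z and ‖·‖₂ is the operator norm induced by ‖·‖_F on S^m.) -/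
open Filter Topology

noncomputable def jordan {ι : Type*} [Fintype ι] (X Y : Matrix ι ι ℝ) : Matrix ι ι ℝ :=
  (2:ℝ)⁻¹ • (X * Y + Y * X)

noncomputable def frobNorm {ι : Type*} [Fintype ι] (A : Matrix ι ι ℝ) : ℝ :=
  Real.sqrt (∑ i, ∑ j, (A i j) ^ 2)

/-!
Write `E = X∘Y - μI` and `K = XY - YX`. Since `X ⪰ 0`, the matrix `XY - μI = X^½ (X^½ Y) - μI`
has the same trace of its square as the symmetric matrix `X^½ Y X^½ - μI`, so that trace is
nonnegative; as `XY - μI = E + K/2` with `E` symmetric and `K` skew, this trace is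
`‖E‖² - ‖K‖²/4`, whence `‖K‖ ≤ 2‖E‖`. Since `X∘(Y∘Z) - Y∘(X∘Z) = (KZ - ZK)/4`, the left-hand
side is at most `‖E‖‖Z‖`.

For the lower bound on `‖X∘Z‖`: if `Xv = λv`, then `vᵀ(X∘Y)v = λ vᵀYv`; the left side is at least
`(μ - ‖E‖)|v|² ≥ μ|v|²/2` and `vᵀYv ≤ ‖Y‖|v|²`, so every eigenvalue of `X` is at least
`μ/(2‖Y‖)`, and then `‖X∘Z‖‖Z‖ ≥ tr(ZXZ) ≥ μ‖Z‖²/(2‖Y‖)`. Altogether the ratio is at most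
`2‖Y‖‖E‖/μ ≤ 2‖Y‖Cμ^ζ`, and `‖Y_r‖` stays bounded because `Y_r` converges.
-/

open Matrix

attribute [local instance] Matrix.frobeniusNormedAddCommGroup Matrix.frobeniusNormSMulClass

section

variable {ι : Type*} [Fintype ι]

lemma frobNorm_eq_norm (A : Matrix ι ι ℝ) : frobNorm A = ‖A‖ := by
  rw [frobNorm, frobenius_norm_def, Real.sqrt_eq_rpow]
  simp [Real.norm_eq_abs, sq_abs]

lemma frobNorm_nonneg (A : Matrix ι ι ℝ) : 0 ≤ frobNorm A := Real.sqrt_nonneg _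

lemma continuous_frobNorm : Continuous (frobNorm : Matrix ι ι ℝ → ℝ) := by
  unfold frobNorm
  fun_prop

namespace Matrix

lemma trace_transpose_mul_eq_sum (A B : Matrix ι ι ℝ) :
    trace (Aᵀ * B) = ∑ i, ∑ j, A i j * B i j := by
  simp only [trace, diag, mul_apply, transpose_apply]
  exact Finset.sum_comm

lemma frobenius_norm_sq_eq_trace (A : Matrix ι ι ℝ) : ‖A‖ ^ 2 = trace (Aᵀ * A) := by
  rw [← frobNorm_eq_norm, frobNorm, Real.sq_sqrt (by positivity), trace_transpose_mul_eq_sum]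
  simp only [sq]

lemma trace_transpose_mul_le (A B : Matrix ι ι ℝ) : trace (Aᵀ * B) ≤ ‖A‖ * ‖B‖ := by
  simpa only [trace_transpose_mul_eq_sum, ← frobNorm_eq_norm, frobNorm, Fintype.sum_prod_type]
    using Real.sum_mul_le_sqrt_mul_sqrt Finset.univ (fun p : ι × ι => A p.1 p.2)
      (fun p => B p.1 p.2)

lemma frobenius_norm_vecMulVec_self (v : ι → ℝ) : ‖vecMulVec v v‖ = v ⬝ᵥ v := by
  rw [← frobNorm_eq_norm, frobNorm,
    ← Real.sqrt_sq (show 0 ≤ v ⬝ᵥ v from Finset.sum_nonneg fun i _ => mul_self_nonneg (v i))]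
  congr 1
  simp only [vecMulVec_apply, dotProduct, sq, Finset.sum_mul_sum]
  exact Finset.sum_congr rfl fun i _ => Finset.sum_congr rfl fun j _ => by ring

lemma dotProduct_mulVec_le (A : Matrix ι ι ℝ) (v : ι → ℝ) :
    v ⬝ᵥ (A *ᵥ v) ≤ ‖A‖ * (v ⬝ᵥ v) :=
  calc v ⬝ᵥ (A *ᵥ v) = trace (Aᵀ * vecMulVec v v) := by
        simp only [trace_transpose_mul_eq_sum, vecMulVec_apply, dotProduct, mulVec, Finset.mul_sum]
        exact Finset.sum_congr rfl fun i _ => Finset.sum_congr rfl fun j _ => by ring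
    _ ≤ ‖A‖ * ‖vecMulVec v v‖ := trace_transpose_mul_le _ _
    _ = ‖A‖ * (v ⬝ᵥ v) := by rw [frobenius_norm_vecMulVec_self]

lemma IsSymm.trace_mul_self {M : Matrix ι ι ℝ} (hM : M.IsSymm) : trace (M * M) = ‖M‖ ^ 2 := by
  rw [frobenius_norm_sq_eq_trace, hM.eq]

lemma trace_mul_self_of_transpose_eq_neg {A : Matrix ι ι ℝ} (hA : Aᵀ = -A) :
    trace (A * A) = -‖A‖ ^ 2 := by
  rw [frobenius_norm_sq_eq_trace, hA, Matrix.neg_mul, trace_neg, neg_neg]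

lemma trace_add_mul_self_of_isSymm_of_transpose_eq_neg {S A : Matrix ι ι ℝ} (hS : S.IsSymm)
    (hA : Aᵀ = -A) : trace ((S + A) * (S + A)) = ‖S‖ ^ 2 - ‖A‖ ^ 2 := by
  have hcross : trace (A * S) = -trace (S * A) := by
    rw [← trace_transpose, transpose_mul, hS.eq, hA, Matrix.mul_neg, trace_neg]
  rw [add_mul, mul_add, mul_add, trace_add, trace_add, trace_add, hS.trace_mul_self,
    trace_mul_self_of_transpose_eq_neg hA, hcross]
  ring

lemma trace_mul_sub_smul_one_mul_self_comm {R : Type*} [CommRing R] [DecidableEq ι]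
    (A B : Matrix ι ι R) (μ : R) :
    trace ((A * B - μ • 1) * (A * B - μ • 1)) = trace ((B * A - μ • 1) * (B * A - μ • 1)) := by
  have h : trace (A * B * (A * B)) = trace (B * A * (B * A)) := by
    rw [← Matrix.mul_assoc, trace_mul_comm, Matrix.mul_assoc, Matrix.mul_assoc]
  simp only [sub_mul, mul_sub, smul_mul_assoc, mul_smul_comm, Matrix.one_mul, Matrix.mul_one,
    trace_sub, trace_smul, h, trace_mul_comm A B]

open scoped MatrixOrder in
lemma trace_mul_sub_smul_one_mul_self_nonneg [DecidableEq ι] {X Y : Matrix ι ι ℝ}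
    (hX : X.PosSemidef) (hY : Y.IsSymm) (μ : ℝ) :
    0 ≤ trace ((X * Y - μ • 1) * (X * Y - μ • 1)) := by
  set s := CFC.sqrt X
  have hs : s.IsSymm := isHermitian_iff_isSymm.mp (CFC.sqrt_nonneg X).posSemidef.isHermitian
  have hM : (s * Y * s - μ • 1).IsSymm := by
    simp only [IsSymm, transpose_sub, transpose_smul, transpose_one, transpose_mul, hs.eq, hY.eq,
      Matrix.mul_assoc]
  rw [← CFC.sqrt_mul_sqrt_self X hX.nonneg, Matrix.mul_assoc, trace_mul_sub_smul_one_mul_self_comm,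
    hM.trace_mul_self]
  positivity

lemma IsSymm.jordan {X Y : Matrix ι ι ℝ} (hX : X.IsSymm) (hY : Y.IsSymm) :
    (jordan X Y).IsSymm := by
  simp only [IsSymm, _root_.jordan, transpose_smul, transpose_add, transpose_mul, hX.eq, hY.eq,
    add_comm]

end Matrix

lemma jordan_jordan_sub_jordan_jordan (X Y Z : Matrix ι ι ℝ) :
    jordan X (jordan Y Z) - jordan Y (jordan X Z)
      = (4 : ℝ)⁻¹ • ((X * Y - Y * X) * Z - Z * (X * Y - Y * X)) := by
  simp only [jordan, smul_add, smul_sub, sub_mul, mul_sub, add_mul, mul_add,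
    smul_mul_assoc, mul_smul_comm, smul_smul, ← Matrix.mul_assoc]
  module

lemma norm_jordan_jordan_sub_jordan_jordan_le (X Y Z : Matrix ι ι ℝ) :
    ‖jordan X (jordan Y Z) - jordan Y (jordan X Z)‖ ≤ ‖X * Y - Y * X‖ * ‖Z‖ / 2 := by
  set K := X * Y - Y * X
  have h : ‖K * Z - Z * K‖ ≤ ‖K‖ * ‖Z‖ + ‖Z‖ * ‖K‖ :=
    (norm_sub_le _ _).trans (add_le_add (frobenius_norm_mul _ _) (frobenius_norm_mul _ _))
  rw [jordan_jordan_sub_jordan_jordan, norm_smul, norm_inv, Real.norm_ofNat]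
  linarith

variable [DecidableEq ι]

lemma norm_commutator_le_two_mul_norm_jordan_sub {X Y : Matrix ι ι ℝ} (hX : X.PosSemidef)
    (hY : Y.IsSymm) (μ : ℝ) : ‖X * Y - Y * X‖ ≤ 2 * ‖jordan X Y - μ • 1‖ := by
  have hXs : X.IsSymm := isHermitian_iff_isSymm.mp hX.isHermitian
  set S := jordan X Y - μ • 1
  set A := (2 : ℝ)⁻¹ • (X * Y - Y * X)
  have hS : S.IsSymm := by
    simp only [S, IsSymm, transpose_sub, transpose_smul, transpose_one, (hXs.jordan hY).eq]
  have hA : Aᵀ = -A := by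
    simp only [A, transpose_smul, transpose_sub, transpose_mul, hXs.eq, hY.eq, ← smul_neg, neg_sub]
  have hSA : X * Y - μ • 1 = S + A := by
    simp only [S, A, jordan]
    module
  have hAS : ‖A‖ ≤ ‖S‖ := by
    have h := trace_mul_sub_smul_one_mul_self_nonneg hX hY μ
    rw [hSA, trace_add_mul_self_of_isSymm_of_transpose_eq_neg hS hA] at h
    exact (sq_le_sq₀ (norm_nonneg _) (norm_nonneg _)).mp (by linarith)
  calc ‖X * Y - Y * X‖ = 2 * ‖A‖ := by rw [norm_smul, norm_inv, Real.norm_ofNat]; ring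
    _ ≤ 2 * ‖S‖ := by gcongr

lemma mul_norm_le_norm_jordan {X Z : Matrix ι ι ℝ} {l : ℝ} (hX : (X - l • 1).PosSemidef)
    (hZ : Z.IsSymm) : l * ‖Z‖ ≤ ‖jordan X Z‖ := by
  have hquad : l * ‖Z‖ ^ 2 ≤ trace (Zᵀ * jordan X Z) := by
    have h := (hX.conjTranspose_mul_mul_same Z).trace_nonneg
    have hcyc : trace (Z * Z * X) = trace (Z * X * Z) := by
      rw [Matrix.mul_assoc, trace_mul_comm]
    simp only [conjTranspose_eq_transpose_of_trivial, hZ.eq, mul_sub, sub_mul, mul_smul_comm,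
      smul_mul_assoc, Matrix.mul_one, trace_sub, trace_smul, smul_eq_mul] at h
    simp only [hZ.eq, jordan, mul_smul_comm, mul_add, trace_smul, trace_add, ← Matrix.mul_assoc,
      hcyc, smul_eq_mul]
    rw [← hZ.trace_mul_self]
    linarith
  rcases (norm_nonneg Z).eq_or_lt with hZ0 | hZ0
  · rw [← hZ0, mul_zero]
    exact norm_nonneg _
  · refine le_of_mul_le_mul_right ?_ hZ0
    nlinarith [trace_transpose_mul_le Z (jordan X Z)]

lemma div_le_of_mulVec_eq_smul_of_norm_jordan_sub_le {X Y : Matrix ι ι ℝ} {v : ι → ℝ}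
    {x μ B : ℝ} (hX : X.PosSemidef) (hv : v ≠ 0) (hXv : X *ᵥ v = x • v) (hB : 0 < B)
    (hYB : ‖Y‖ ≤ B) (hE : ‖jordan X Y - μ • 1‖ ≤ μ / 2) : μ / (2 * B) ≤ x := by
  have hvv : 0 < v ⬝ᵥ v := (Finset.sum_nonneg fun i _ => mul_self_nonneg (v i)).lt_of_ne'
    (mt dotProduct_self_eq_zero.mp hv)
  have hx : 0 ≤ x := by
    have h := hX.dotProduct_mulVec_nonneg v
    rw [star_trivial, hXv, dotProduct_smul, smul_eq_mul] at h
    exact nonneg_of_mul_nonneg_left h hvv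
  have hvX : v ᵥ* X = x • v := by
    rw [← mulVec_transpose, (isHermitian_iff_isSymm.mp hX.isHermitian).eq, hXv]
  have hjordan : v ⬝ᵥ (jordan X Y *ᵥ v) = x * (v ⬝ᵥ (Y *ᵥ v)) := by
    simp only [jordan, smul_mulVec, add_mulVec, ← mulVec_mulVec, hXv, mulVec_smul, dotProduct_smul,
      dotProduct_add, dotProduct_mulVec, hvX, smul_vecMul, smul_dotProduct, smul_eq_mul]
    ring
  have hcentral : μ / 2 * (v ⬝ᵥ v) ≤ x * (v ⬝ᵥ (Y *ᵥ v)) := by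
    have h := dotProduct_mulVec_le (-(jordan X Y - μ • 1)) v
    rw [norm_neg, neg_mulVec, dotProduct_neg, sub_mulVec, dotProduct_sub, smul_mulVec, one_mulVec,
      dotProduct_smul, smul_eq_mul, hjordan] at h
    nlinarith
  have hq : v ⬝ᵥ (Y *ᵥ v) ≤ B * (v ⬝ᵥ v) := (dotProduct_mulVec_le Y v).trans (by gcongr)
  rw [div_le_iff₀ (by positivity)]
  nlinarith [mul_le_mul_of_nonneg_left hq hx]

open scoped MatrixOrder in
lemma posSemidef_sub_smul_one_of_norm_jordan_sub_le {X Y : Matrix ι ι ℝ} {μ B : ℝ}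
    (hX : X.PosSemidef) (hB : 0 < B) (hYB : ‖Y‖ ≤ B) (hE : ‖jordan X Y - μ • 1‖ ≤ μ / 2) :
    (X - (μ / (2 * B)) • 1).PosSemidef := by
  rw [← le_iff, ← Algebra.algebraMap_eq_smul_one]
  refine (algebraMap_le_iff_le_spectrum hX.isHermitian.isSelfAdjoint).2 fun x hx => ?_
  rw [← spectrum_toLin', ← Module.End.hasEigenvalue_iff_mem_spectrum] at hx
  obtain ⟨v, hv⟩ := hx.exists_hasEigenvector
  exact div_le_of_mulVec_eq_smul_of_norm_jordan_sub_le hX hv.2 (by simpa using hv.apply_eq_smul)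
    hB hYB hE

lemma frobNorm_jordan_jordan_sub_jordan_jordan_le {X Y Z : Matrix ι ι ℝ} {μ B : ℝ}
    (hX : X.PosSemidef) (hY : Y.IsSymm) (hZ : Z.IsSymm) (hμ : 0 < μ) (hB : 0 < B)
    (hYB : frobNorm Y ≤ B) (hE : frobNorm (jordan X Y - μ • 1) ≤ μ / 2) :
    frobNorm (jordan X (jordan Y Z) - jordan Y (jordan X Z))
      ≤ 2 * B / μ * frobNorm (jordan X Y - μ • 1) * frobNorm (jordan X Z) := by
  simp only [frobNorm_eq_norm] at *
  have hXZ := mul_norm_le_norm_jordan (posSemidef_sub_smul_one_of_norm_jordan_sub_le hX hB hYB hE) hZ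
  calc ‖jordan X (jordan Y Z) - jordan Y (jordan X Z)‖ ≤ ‖X * Y - Y * X‖ * ‖Z‖ / 2 :=
        norm_jordan_jordan_sub_jordan_jordan_le X Y Z
    _ ≤ ‖jordan X Y - μ • 1‖ * ‖Z‖ := by
        nlinarith [norm_commutator_le_two_mul_norm_jordan_sub hX hY μ, norm_nonneg Z]
    _ = 2 * B / μ * ‖jordan X Y - μ • 1‖ * (μ / (2 * B) * ‖Z‖) := by
        field_simp
    _ ≤ 2 * B / μ * ‖jordan X Y - μ • 1‖ * ‖jordan X Z‖ := by gcongr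

end

theorem commutator_operator_bound_general {m : ℕ}
    (Ystar : Matrix (Fin m) (Fin m) ℝ)
    (μ : ℕ → ℝ) (hμpos : ∀ r, 0 < μ r) (hμ0 : Tendsto μ atTop (𝓝 0))
    (X Y : ℕ → Matrix (Fin m) (Fin m) ℝ)
    (hXpd : ∀ r, (X r).PosDef) (hYpd : ∀ r, (Y r).PosDef)
    (hYlim : Tendsto Y atTop (𝓝 Ystar))
    (C ζ : ℝ) (hC : 0 < C) (hζ : 0 < ζ)
    (hrate : ∀ r,
      frobNorm (jordan (X r) (Y r) - μ r • (1 : Matrix (Fin m) (Fin m) ℝ)) ≤ C * μ r ^ (1 + ζ)) :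
    ∃ M : ℝ, 0 < M ∧ ∃ R : ℕ, ∀ r ≥ R, ∀ Z : Matrix (Fin m) (Fin m) ℝ, Z.IsSymm →
      frobNorm (jordan (X r) (jordan (Y r) Z) - jordan (Y r) (jordan (X r) Z))
        ≤ M * μ r ^ ζ * frobNorm (jordan (X r) Z) := by
  set B := frobNorm Ystar + 1
  have hB : 0 < B := add_pos_of_nonneg_of_pos (frobNorm_nonneg _) one_pos
  have hYB : ∀ᶠ r in atTop, frobNorm (Y r) ≤ B :=
    ((continuous_frobNorm.tendsto Ystar).comp hYlim).eventually_le_const (lt_add_one _)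
  have hsmall : ∀ᶠ r in atTop, C * μ r ^ ζ ≤ 1 / 2 := by
    have h := (hμ0.rpow_const (Or.inr hζ.le)).const_mul C
    rw [Real.zero_rpow hζ.ne', mul_zero] at h
    exact h.eventually_le_const one_half_pos
  obtain ⟨R, hR⟩ := eventually_atTop.mp (hYB.and hsmall)
  refine ⟨2 * B * C, by positivity, R, fun r hr Z hZ => ?_⟩
  obtain ⟨hYBr, hsmallr⟩ := hR r hr
  have hpow : μ r ^ (1 + ζ) = μ r * μ r ^ ζ := by rw [Real.rpow_add (hμpos r), Real.rpow_one]
  have hE : frobNorm (jordan (X r) (Y r) - μ r • 1) ≤ μ r / 2 :=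
    (hrate r).trans (by rw [hpow]; nlinarith [hμpos r])
  calc _ ≤ 2 * B / μ r * frobNorm (jordan (X r) (Y r) - μ r • 1) * frobNorm (jordan (X r) Z) :=
        frobNorm_jordan_jordan_sub_jordan_jordan_le (hXpd r).posSemidef
          (isHermitian_iff_isSymm.mp (hYpd r).isHermitian) hZ (hμpos r) hB hYBr hE
    _ ≤ 2 * B / μ r * (C * μ r ^ (1 + ζ)) * frobNorm (jordan (X r) Z) := by
        gcongr
        exacts [frobNorm_nonneg _, div_nonneg (mul_pos two_pos hB).le (hμpos r).le, hrate r]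
    _ = 2 * B * C * μ r ^ ζ * frobNorm (jordan (X r) Z) := by
        rw [hpow]
        field_simp [(hμpos r).ne']

/-- under strict complementarity and the centrality rate
‖X_r∘Y_r − μ_r I‖_F ≤ C μ_r^{1+ζ}, one has
‖L_{X_r}L_{Y_r}L_{X_r}⁻¹ − L_{Y_r}‖₂ = O(μ_r^ζ). -/
theorem commutator_operator_bound {m : ℕ}
    (Xstar Ystar : Matrix (Fin m) (Fin m) ℝ)
    (hXs : Xstar.PosSemidef) (hYs : Ystar.PosSemidef)
    (hcomp : jordan Xstar Ystar = 0) (hstrict : (Xstar + Ystar).PosDef)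
    (μ : ℕ → ℝ) (hμpos : ∀ r, 0 < μ r) (hμ0 : Tendsto μ atTop (𝓝 0))
    (X Y : ℕ → Matrix (Fin m) (Fin m) ℝ)
    (hXpd : ∀ r, (X r).PosDef) (hYpd : ∀ r, (Y r).PosDef)
    (hXlim : Tendsto X atTop (𝓝 Xstar)) (hYlim : Tendsto Y atTop (𝓝 Ystar))
    (C ζ : ℝ) (hC : 0 < C) (hζ : 0 < ζ)
    (hrate : ∀ r,
      frobNorm (jordan (X r) (Y r) - μ r • (1 : Matrix (Fin m) (Fin m) ℝ)) ≤ C * μ r ^ (1 + ζ)) :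
    ∃ M : ℝ, 0 < M ∧ ∃ R : ℕ, ∀ r ≥ R, ∀ Z : Matrix (Fin m) (Fin m) ℝ, Z.IsSymm →
      frobNorm (jordan (X r) (jordan (Y r) Z) - jordan (Y r) (jordan (X r) Z))
        ≤ M * μ r ^ ζ * frobNorm (jordan (X r) Z) :=
  commutator_operator_bound_general Ystar μ hμpos hμ0 X Y hXpd hYpd hYlim C ζ hC hζ hrate
end

section
/- Let p, q be positive integers with p + q = m. Let O* be an m×m orthogonal matrix, D_{X*} a p×p positive diagonal matrix, and D_{Y*} a q×q positive diagonal matrix, and let X*, Y* ∈ S^m be given by O*ᵀX*O* = diag(D_{X*}, O) and O*ᵀY*O* = diag(O, D_{Y*}). Let μ_r > 0 with μ_r → 0, let (X_r, Y_r) ∈ S^m_{++} × S^m_{++} with (X_r, Y_r) → (X*, Y*), and let O_r be orthogonal matrices with O_r → O* such that O_rᵀX_rO_r = diag(D_{X_r}, E_{X_r}) where D_{X_r} (p×p) and E_{X_r} (q×q) are positive diagonal matrices. If ‖X_r∘Y_r − μ_r I‖_F = o(μ_r), then (1/μ_r)·E_{X_r} → D_{Y*}^{-1} as r → ∞. -/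
open Filter Topology Matrix Asymptotics

lemma entry_le_frobNorm {ι : Type*} [Fintype ι] (A : Matrix ι ι ℝ) (i j : ι) :
    |A i j| ≤ frobNorm A := by
  rw [frobNorm, ← Real.sqrt_sq_eq_abs]
  apply Real.sqrt_le_sqrt
  calc A i j ^ 2 ≤ ∑ j', A i j' ^ 2 :=
        Finset.single_le_sum (f := fun j' => A i j' ^ 2)
          (fun _ _ => sq_nonneg _) (Finset.mem_univ j)
    _ ≤ ∑ i', ∑ j', A i' j' ^ 2 :=
        Finset.single_le_sum (f := fun i' => ∑ j', A i' j' ^ 2)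
          (fun _ _ => Finset.sum_nonneg fun _ _ => sq_nonneg _) (Finset.mem_univ i)

lemma frobNorm_conj {ι : Type*} [Fintype ι] [DecidableEq ι] (Q A : Matrix ι ι ℝ)
    (hQ : Qᵀ * Q = 1) : frobNorm (Qᵀ * A * Q) = frobNorm A := by
  have hQQT : Q * Qᵀ = 1 := mul_eq_one_comm.mp hQ
  have hsq : ∀ (M : Matrix ι ι ℝ), ∑ i, ∑ j, M i j ^ 2 = Matrix.trace (Mᵀ * M) := by
    intro M
    rw [Matrix.trace]
    rw [Finset.sum_comm]
    simp [Matrix.mul_apply, Matrix.diag, sq]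
  have hconj : (Qᵀ * A * Q)ᵀ * (Qᵀ * A * Q) = Qᵀ * (Aᵀ * A) * Q := by
    have h1 : (Qᵀ * A * Q)ᵀ = Qᵀ * Aᵀ * Q := by
      simp [Matrix.transpose_mul, Matrix.mul_assoc]
    rw [h1]
    calc Qᵀ * Aᵀ * Q * (Qᵀ * A * Q) = Qᵀ * Aᵀ * (Q * Qᵀ) * A * Q := by
          simp only [Matrix.mul_assoc]
      _ = Qᵀ * (Aᵀ * A) * Q := by rw [hQQT]; simp only [Matrix.mul_one, Matrix.mul_assoc]
  unfold frobNorm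
  rw [hsq, hsq, hconj, Matrix.mul_assoc, Matrix.trace_mul_comm, Matrix.mul_assoc, hQQT,
    Matrix.mul_one]

/-- under strict complementarity in spectral block form, if
‖X_r∘Y_r − μ_r I‖_F = o(μ_r), then (1/μ_r)·E_{X_r} → D_{Y*}⁻¹. -/
theorem small_eigenvalue_limit (p q : ℕ) (hp : 0 < p) (hq : 0 < q)
    (Ostar : Matrix (Fin p ⊕ Fin q) (Fin p ⊕ Fin q) ℝ) (hOstar : Ostarᵀ * Ostar = 1)
    (DXstar : Fin p → ℝ) (hDXstar : ∀ i, 0 < DXstar i)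
    (DYstar : Fin q → ℝ) (hDYstar : ∀ i, 0 < DYstar i)
    (Xstar Ystar : Matrix (Fin p ⊕ Fin q) (Fin p ⊕ Fin q) ℝ)
    (hXstar : Ostarᵀ * Xstar * Ostar = Matrix.fromBlocks (Matrix.diagonal DXstar) 0 0 0)
    (hYstar : Ostarᵀ * Ystar * Ostar = Matrix.fromBlocks 0 0 0 (Matrix.diagonal DYstar))
    (μ : ℕ → ℝ) (hμpos : ∀ r, 0 < μ r) (hμ0 : Tendsto μ atTop (𝓝 0))
    (X Y : ℕ → Matrix (Fin p ⊕ Fin q) (Fin p ⊕ Fin q) ℝ)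
    (hXpd : ∀ r, (X r).PosDef) (hYpd : ∀ r, (Y r).PosDef)
    (hXlim : Tendsto X atTop (𝓝 Xstar)) (hYlim : Tendsto Y atTop (𝓝 Ystar))
    (O : ℕ → Matrix (Fin p ⊕ Fin q) (Fin p ⊕ Fin q) ℝ)
    (hO : ∀ r, (O r)ᵀ * O r = 1) (hOlim : Tendsto O atTop (𝓝 Ostar))
    (DX : ℕ → Fin p → ℝ) (EX : ℕ → Fin q → ℝ)
    (hDXpos : ∀ r i, 0 < DX r i) (hEXpos : ∀ r i, 0 < EX r i)
    (hdiag : ∀ r, (O r)ᵀ * X r * O r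
        = Matrix.fromBlocks (Matrix.diagonal (DX r)) 0 0 (Matrix.diagonal (EX r)))
    (hrate : (fun r => frobNorm (jordan (X r) (Y r)
        - μ r • (1 : Matrix (Fin p ⊕ Fin q) (Fin p ⊕ Fin q) ℝ))) =o[atTop] μ) :
    Tendsto (fun r => (μ r)⁻¹ • Matrix.diagonal (EX r)) atTop
      (𝓝 (Matrix.diagonal fun i => (DYstar i)⁻¹)) := by
  set B : ℕ → Matrix (Fin p ⊕ Fin q) (Fin p ⊕ Fin q) ℝ := fun r => (O r)ᵀ * Y r * O r with hB
  have hOOT : ∀ r, O r * (O r)ᵀ = 1 := fun r => mul_eq_one_comm.mp (hO r)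
  -- entry identity
  have key : ∀ r (i : Fin q),
      ((O r)ᵀ * (jordan (X r) (Y r) - μ r • 1) * O r) (Sum.inr i) (Sum.inr i)
        = EX r i * B r (Sum.inr i) (Sum.inr i) - μ r := by
    intro r i
    have hA : (O r)ᵀ * X r * O r = Matrix.diagonal (Sum.elim (DX r) (EX r)) := by
      rw [hdiag r, Matrix.fromBlocks_diagonal]
    have assoc : ∀ (M N : Matrix (Fin p ⊕ Fin q) (Fin p ⊕ Fin q) ℝ),
        ((O r)ᵀ * M * O r) * ((O r)ᵀ * N * O r) = (O r)ᵀ * (M * N) * O r := by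
      intro M N
      calc ((O r)ᵀ * M * O r) * ((O r)ᵀ * N * O r)
          = (O r)ᵀ * M * (O r * (O r)ᵀ) * N * O r := by simp only [Matrix.mul_assoc]
        _ = (O r)ᵀ * (M * N) * O r := by
            rw [hOOT r]; simp only [Matrix.mul_one, Matrix.mul_assoc]
  -- conjugate the whole thing
    have hconj : (O r)ᵀ * (jordan (X r) (Y r) - μ r • 1) * O r
        = (2:ℝ)⁻¹ • (Matrix.diagonal (Sum.elim (DX r) (EX r)) * B r
            + B r * Matrix.diagonal (Sum.elim (DX r) (EX r))) - μ r • 1 := by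
      have h1 : Matrix.diagonal (Sum.elim (DX r) (EX r)) * B r
          = (O r)ᵀ * (X r * Y r) * O r := by rw [← hA, hB]; exact assoc _ _
      have h2 : B r * Matrix.diagonal (Sum.elim (DX r) (EX r))
          = (O r)ᵀ * (Y r * X r) * O r := by rw [← hA, hB]; exact assoc _ _
      rw [h1, h2, jordan]
      simp only [Matrix.sub_mul, Matrix.mul_sub, Matrix.smul_mul, Matrix.mul_smul,
        Matrix.add_mul, Matrix.mul_add, Matrix.one_mul, Matrix.mul_one, hO r]
    rw [hconj]
    simp only [Matrix.sub_apply, Matrix.smul_apply, Matrix.add_apply,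
      Matrix.diagonal_mul, Matrix.mul_diagonal, Matrix.one_apply_eq, smul_eq_mul,
      Sum.elim_inr]
    ring
  -- it suffices to show each entry converges
  have main : ∀ i : Fin q, Tendsto (fun r => EX r i / μ r) atTop (𝓝 (DYstar i)⁻¹) := by
    intro i
    -- B entry limit
    have hBlim : Tendsto (fun r => B r (Sum.inr i) (Sum.inr i)) atTop (𝓝 (DYstar i)) := by
      have hc : Continuous (fun pr : Matrix (Fin p ⊕ Fin q) (Fin p ⊕ Fin q) ℝ ×
          Matrix (Fin p ⊕ Fin q) (Fin p ⊕ Fin q) ℝ =>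
          (pr.1ᵀ * pr.2 * pr.1) (Sum.inr i) (Sum.inr i)) :=
        ((continuous_fst.matrix_transpose.matrix_mul continuous_snd).matrix_mul
          continuous_fst).matrix_elem _ _
      have h := (hc.tendsto (Ostar, Ystar)).comp (hOlim.prodMk_nhds hYlim)
      have hval : (Ostarᵀ * Ystar * Ostar) (Sum.inr i) (Sum.inr i) = DYstar i := by
        rw [hYstar]; simp [Matrix.fromBlocks]
      rw [hval] at h
      exact h
    -- little-o of entry
    have hlo : (fun r => EX r i * B r (Sum.inr i) (Sum.inr i) - μ r) =o[atTop] μ := by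
      refine (IsBigO.of_bound 1 ?_).trans_isLittleO hrate
      filter_upwards with r
      rw [one_mul, Real.norm_eq_abs, Real.norm_eq_abs, ← key r i]
      have hfb := entry_le_frobNorm ((O r)ᵀ * (jordan (X r) (Y r) - μ r • 1) * O r)
        (Sum.inr i) (Sum.inr i)
      rw [frobNorm_conj _ _ (hO r)] at hfb
      exact hfb.trans (le_abs_self _)
    have hdiv : Tendsto (fun r => (EX r i * B r (Sum.inr i) (Sum.inr i) - μ r) / μ r)
        atTop (𝓝 0) := by
      refine (isLittleO_iff_tendsto fun r h => absurd h (hμpos r).ne').mp hlo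
    have hratio : Tendsto (fun r => EX r i * B r (Sum.inr i) (Sum.inr i) / μ r)
        atTop (𝓝 1) := by
      have := hdiv.add (tendsto_const_nhds (x := (1:ℝ)))
      rw [zero_add] at this
      refine this.congr fun r => ?_
      rw [sub_div, div_self (hμpos r).ne', sub_add_cancel]
    have hmul := hratio.mul (hBlim.inv₀ (hDYstar i).ne')
    rw [one_mul] at hmul
    have hev : ∀ᶠ r in atTop, EX r i * B r (Sum.inr i) (Sum.inr i) / μ r
        * (B r (Sum.inr i) (Sum.inr i))⁻¹ = EX r i / μ r := by
      filter_upwards [hBlim.eventually_ne (hDYstar i).ne'] with r hne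
      rw [div_mul_eq_mul_div, mul_assoc, mul_inv_cancel₀ hne, mul_one]
    exact (hmul.congr' hev)
  -- assemble matrix convergence
  refine tendsto_pi_nhds.mpr fun a => tendsto_pi_nhds.mpr fun b => ?_
  by_cases hab : a = b
  · subst hab
    simp only [Matrix.smul_apply, Matrix.diagonal_apply_eq, smul_eq_mul]
    have := main a
    refine this.congr fun r => ?_
    rw [div_eq_inv_mul]
  · simp only [Matrix.smul_apply, Matrix.diagonal_apply_ne _ hab, smul_eq_mul, mul_zero]
    exact tendsto_const_nhds
end
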